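/- Combinatorial core of the converse (Theorem 2): let r ≥ 1 and M ≥ 1 be integers and let d : V(r) → ℕ be any assignment of degrees of freedom satisfying d_v ≤ M for every v ∈ V(r) and d_u + d_v ≤ M for every edge {u,v} ∈ E(r). Then 2·Σ_{v ∈ V(r)} d_v ≤ ⌊3M/2⌋·|T(r)| + 2M·|V_ex(r)|. -/

import Mathlib

/-- Vertex set of the cellular interference graph: pairs `(a,b)` identified with
the Eisenstein integer `a + bω`, where `ω = (−1+i√3)/2`, satisfying
`|Re(a+bω)| ≤ r` and `|Im(a+bω)| ≤ (√3/2)r`, i.e. `|2a − b| ≤ 2r` and `|b| ≤ r`. -/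
noncomputable def V (r : ℤ) : Finset (ℤ × ℤ) :=
  (Finset.Icc (-(2 * r)) (2 * r) ×ˢ Finset.Icc (-r) r).filter
    (fun p => |2 * p.1 - p.2| ≤ 2 * r ∧ |p.2| ≤ r)

/-- `f(a,b) = (a+b) mod 3`. -/
def f (p : ℤ × ℤ) : ℤ := (p.1 + p.2) % 3

/-- Triangle index set: `(a,b)` with `f(a,b) ≠ 0` such that all three points
`(a,b)`, `(a,b+1)`, `(a+1,b+1)` lie in `V r`. -/
noncomputable def T (r : ℤ) : Finset (ℤ × ℤ) :=
  (V r).filter (fun p => f p ≠ 0 ∧ (p.1, p.2 + 1) ∈ V r ∧ (p.1 + 1, p.2 + 1) ∈ V r)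

/-- The vertex set of the triangle indexed by `p = (a,b)`:
`{(a,b), (a,b+1), (a+1,b+1)}`. -/
def triVerts (p : ℤ × ℤ) : Finset (ℤ × ℤ) := {p, (p.1, p.2 + 1), (p.1 + 1, p.2 + 1)}

/-- The number `n_v` of triangles of `T r` whose vertex set contains `v`. -/
noncomputable def nTri (r : ℤ) (v : ℤ × ℤ) : ℕ := ((T r).filter (fun p => v ∈ triVerts p)).card

/-- The boundary vertices: those belonging to fewer than two triangles. -/
noncomputable def Vex (r : ℤ) : Finset (ℤ × ℤ) := (V r).filter (fun v => nTri r v < 2)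

/-- Adjacency (edge) relation of the cellular interference graph: `{u,v}` is an
edge iff `u, v ∈ V r` and there is `(a,b) ∈ ℤ²` with `(a+b) mod 3 ≠ 0` such that
`{u,v}` is one of `{(a,b),(a,b+1)}`, `{(a,b),(a+1,b+1)}`, `{(a,b+1),(a+1,b+1)}`. -/
def Adj (r : ℤ) (u v : ℤ × ℤ) : Prop :=
  u ∈ V r ∧ v ∈ V r ∧ ∃ a b : ℤ, (a + b) % 3 ≠ 0 ∧
    ( ({u, v} : Set (ℤ × ℤ)) = {(a, b), (a, b + 1)} ∨
      ({u, v} : Set (ℤ × ℤ)) = {(a, b), (a + 1, b + 1)} ∨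
      ({u, v} : Set (ℤ × ℤ)) = {(a, b + 1), (a + 1, b + 1)} )

/-! Each triangle of `T r` carries total weight at most `⌊3M/2⌋`, since its three sides are
edges; summing over triangles counts every vertex `v` exactly `n_v ≤ 2` times, and the
missing `2 - n_v` copies, nonzero only on `V_ex(r)`, are bounded by `2M` each. The bound
`n_v ≤ 2` holds because the three lattice triangles through `v` have pairwise distinct
values of `f`, so at most two of them have `f ≠ 0`. -/

lemma mem_triVerts {v p : ℤ × ℤ} :
    v ∈ triVerts p ↔ v = p ∨ v = (p.1, p.2 + 1) ∨ v = (p.1 + 1, p.2 + 1) := by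
  simp [triVerts]

lemma sum_triVerts {β : Type*} [AddCommMonoid β] (g : ℤ × ℤ → β) (p : ℤ × ℤ) :
    ∑ v ∈ triVerts p, g v = g p + g (p.1, p.2 + 1) + g (p.1 + 1, p.2 + 1) := by
  rw [triVerts, Finset.sum_insert (by simp [Prod.ext_iff]),
    Finset.sum_pair (by simp [Prod.ext_iff]), add_assoc]

lemma triVerts_subset_of_mem_T {r : ℤ} {p : ℤ × ℤ} (hp : p ∈ T r) : triVerts p ⊆ V r := by
  simp only [T, Finset.mem_filter] at hp
  intro v hv
  rcases mem_triVerts.mp hv with rfl | rfl | rfl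
  exacts [hp.1, hp.2.2.1, hp.2.2.2]

lemma adj_of_mem_triVerts {r : ℤ} {p : ℤ × ℤ} (hp : p ∈ T r) {u v : ℤ × ℤ}
    (hu : u ∈ triVerts p) (hv : v ∈ triVerts p) (huv : u ≠ v) : Adj r u v := by
  have hsub := triVerts_subset_of_mem_T hp
  have hf : (p.1 + p.2) % 3 ≠ 0 := (Finset.mem_filter.mp hp).2.1
  refine ⟨hsub hu, hsub hv, p.1, p.2, hf, ?_⟩
  rcases mem_triVerts.mp hu with rfl | rfl | rfl <;>
    rcases mem_triVerts.mp hv with rfl | rfl | rfl <;>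
    first
    | exact absurd rfl huv
    | simp [Set.pair_comm]

lemma add_add_le_of_pairwise_add_le {a b c M : ℕ}
    (hab : a + b ≤ M) (hac : a + c ≤ M) (hbc : b + c ≤ M) : a + b + c ≤ 3 * M / 2 := by
  omega

lemma sum_triVerts_le {r : ℤ} {M : ℕ} {d : ℤ × ℤ → ℕ}
    (hedge : ∀ u v : ℤ × ℤ, Adj r u v → d u + d v ≤ M) {p : ℤ × ℤ} (hp : p ∈ T r) :
    ∑ v ∈ triVerts p, d v ≤ 3 * M / 2 := by
  have edge {u v : ℤ × ℤ} (hu : u ∈ triVerts p) (hv : v ∈ triVerts p) (huv : u ≠ v) :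
      d u + d v ≤ M :=
    hedge u v (adj_of_mem_triVerts hp hu hv huv)
  rw [sum_triVerts]
  exact add_add_le_of_pairwise_add_le
    (edge (by simp [triVerts]) (by simp [triVerts]) (by simp [Prod.ext_iff]))
    (edge (by simp [triVerts]) (by simp [triVerts]) (by simp [Prod.ext_iff]))
    (edge (by simp [triVerts]) (by simp [triVerts]) (by simp))

lemma eq_of_mem_triVerts_of_f_eq {v p q : ℤ × ℤ} (hp : v ∈ triVerts p) (hq : v ∈ triVerts q)
    (hf : f p = f q) : p = q := by
  simp only [f] at hf
  rcases mem_triVerts.mp hp with rfl | rfl | rfl <;>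
    rcases mem_triVerts.mp hq with h | h | h <;>
    simp only [Prod.ext_iff] at h ⊢ <;> omega

lemma nTri_le_two (r : ℤ) (v : ℤ × ℤ) : nTri r v ≤ 2 := by
  have hmaps : Set.MapsTo f ((T r).filter (v ∈ triVerts ·)) ({1, 2} : Finset ℤ) := by
    intro p hp
    have hfp : f p ≠ 0 := (Finset.mem_filter.mp (Finset.mem_filter.mp hp).1).2.1
    simp only [f, Finset.coe_insert, Finset.coe_singleton, Set.mem_insert_iff,
      Set.mem_singleton_iff] at hfp ⊢
    omega
  have hinj : Set.InjOn f ((T r).filter (v ∈ triVerts ·)) := fun p hp q hq =>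
    eq_of_mem_triVerts_of_f_eq (Finset.mem_filter.mp hp).2 (Finset.mem_filter.mp hq).2
  exact Finset.card_le_card_of_injOn f hmaps hinj

lemma sum_T_sum_triVerts {β : Type*} [AddCommMonoid β] (r : ℤ) (g : ℤ × ℤ → β) :
    ∑ p ∈ T r, ∑ v ∈ triVerts p, g v = ∑ v ∈ V r, nTri r v • g v := by
  have hrestrict (p : ℤ × ℤ) (hp : p ∈ T r) :
      ∑ v ∈ triVerts p, g v = ∑ v ∈ V r, if v ∈ triVerts p then g v else 0 := by
    rw [← Finset.sum_filter, Finset.filter_mem_eq_inter,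
      Finset.inter_eq_right.mpr (triVerts_subset_of_mem_T hp)]
  rw [Finset.sum_congr rfl hrestrict, Finset.sum_comm]
  refine Finset.sum_congr rfl fun v _ => ?_
  rw [← Finset.sum_filter, Finset.sum_const, nTri]

lemma sum_two_sub_nTri_mul_le {r : ℤ} {M : ℕ} {d : ℤ × ℤ → ℕ} (hd : ∀ v ∈ V r, d v ≤ M) :
    ∑ v ∈ V r, (2 - nTri r v) * d v ≤ (Vex r).card * (2 * M) := by
  have hVex : ∑ v ∈ V r, (2 - nTri r v) * d v = ∑ v ∈ Vex r, (2 - nTri r v) * d v := by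
    refine (Finset.sum_subset (Finset.filter_subset _ _) fun v hv hnv => ?_).symm
    simp only [Finset.mem_filter, hv, true_and, not_lt] at hnv
    simp [Nat.sub_eq_zero_of_le hnv]
  rw [hVex]
  refine Finset.sum_le_card_nsmul _ _ _ fun v hv => ?_
  exact Nat.mul_le_mul (Nat.sub_le 2 _) (hd v (Finset.mem_filter.mp hv).1)

theorem converse_core_general (r : ℤ) (M : ℕ)
    (d : ℤ × ℤ → ℕ)
    (hd : ∀ v ∈ V r, d v ≤ M)
    (hedge : ∀ u v : ℤ × ℤ, Adj r u v → d u + d v ≤ M) :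
    2 * ∑ v ∈ V r, d v ≤ (3 * M / 2) * (T r).card + 2 * M * (Vex r).card := by
  have hsplit : 2 * ∑ v ∈ V r, d v
      = ∑ v ∈ V r, nTri r v * d v + ∑ v ∈ V r, (2 - nTri r v) * d v := by
    rw [Finset.mul_sum, ← Finset.sum_add_distrib]
    refine Finset.sum_congr rfl fun v _ => ?_
    rw [← add_mul, Nat.add_sub_cancel' (nTri_le_two r v)]
  have htri : ∑ v ∈ V r, nTri r v * d v ≤ (T r).card * (3 * M / 2) := by
    simp_rw [← smul_eq_mul (a := nTri r _), ← sum_T_sum_triVerts]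
    exact Finset.sum_le_card_nsmul _ _ _ fun p hp => sum_triVerts_le hedge hp
  calc 2 * ∑ v ∈ V r, d v
      ≤ (T r).card * (3 * M / 2) + (Vex r).card * (2 * M) := by
        rw [hsplit]; exact add_le_add htri (sum_two_sub_nTri_mul_le hd)
    _ = (3 * M / 2) * (T r).card + 2 * M * (Vex r).card := by ring

/-- **Combinatorial core of the converse (Theorem 2).** If `d : V(r) → ℕ`
satisfies `d_v ≤ M` for all `v ∈ V(r)` and `d_u + d_v ≤ M` on every edge, then
`2·Σ_{v ∈ V(r)} d_v ≤ ⌊3M/2⌋·|T(r)| + 2M·|V_ex(r)|` (natural division is floor). -/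
theorem converse_core (r : ℤ) (hr : 1 ≤ r) (M : ℕ) (hM : 1 ≤ M)
    (d : ℤ × ℤ → ℕ)
    (hd : ∀ v ∈ V r, d v ≤ M)
    (hedge : ∀ u v : ℤ × ℤ, Adj r u v → d u + d v ≤ M) :
    2 * ∑ v ∈ V r, d v ≤ (3 * M / 2) * (T r).card + 2 * M * (Vex r).card :=
  converse_core_general r M d hd hedge
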